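/- The tail fast function forcing F_{γ,κ}, consisting of partial functions q : κ → κ of size < κ with dom(q) ⊆ (γ, κ), every element of dom(q) inaccessible, q″δ ⊆ δ and |q ↾ δ| < δ for δ ∈ dom(q), ordered by inclusion, is ≤γ-closed: every descending chain of conditions of length ≤ γ has a lower bound, namely its union. -/

import Mathlib

open FirstOrder

/-- The language of set theory: one binary relation (membership). -/
def memLang : Language :=
  { Functions := fun _ => Empty
    Relations := fun n => match n with | 2 => Unit | _ => Empty }

/-- Any set of `ZFSet`s (the elements of a `ZFSet`) is a structure for the
language of set theory, interpreting the relation as membership. -/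
instance zfSubStructure (M : ZFSet) : memLang.Structure {x : ZFSet // x ∈ M} where
  funMap := fun {n} f _ => nomatch f
  RelMap := fun {n} r =>
    match n, r with
    | 2, _ => fun v => (v 0).1 ∈ (v 1).1

/-- `M` is a transitive set. -/
def ZTrans (M : ZFSet) : Prop := ∀ x ∈ M, ∀ y ∈ x, y ∈ M

/-- The cardinality of (the set of elements of) a `ZFSet`. -/
noncomputable def zCard (x : ZFSet) : Cardinal := Cardinal.mk x.toSet

/-- `M` has the same size as `κ`. -/
def HasSize (M κ : ZFSet) : Prop := zCard M = zCard κ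

/-- `M` is closed under `<κ`-sequences (in `V`): every set-function from an
ordinal `α ∈ κ` into `M` is an element of `M`. -/
def SeqClosed (κ M : ZFSet) : Prop :=
  ∀ α ∈ κ, ∀ f : ZFSet, ZFSet.IsFunc α M f → f ∈ M

/-- An elementary embedding from `M` to `N` (for the language of set theory),
coded as a set `j` of ordered pairs. -/
def ElemEmbSet (M N j : ZFSet) : Prop :=
  ZFSet.IsFunc M N j ∧
  ∀ (n : ℕ) (φ : memLang.Formula (Fin n))
    (v : Fin n → {x : ZFSet // x ∈ M}) (w : Fin n → {x : ZFSet // x ∈ N}),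
    (∀ i, ZFSet.pair (v i).1 (w i).1 ∈ j) → (φ.Realize v ↔ φ.Realize w)

/-- `X` is an elementary substructure of `N` (both viewed as ∈-structures). -/
def ElemSub (X N : ZFSet) : Prop :=
  X ⊆ N ∧
  ∀ (n : ℕ) (φ : memLang.Formula (Fin n))
    (v : Fin n → {x : ZFSet // x ∈ X}) (w : Fin n → {x : ZFSet // x ∈ N}),
    (∀ i, (v i).1 = (w i).1) → (φ.Realize v ↔ φ.Realize w)

/-- The (set-coded) map `j` has critical point `κ`: it fixes every ordinal
below `κ` and moves `κ` (i.e. `κ < j(κ)`). -/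
def CritPt (j κ : ZFSet) : Prop :=
  (∀ x ∈ κ, ZFSet.pair x x ∈ j) ∧ ∀ y, ZFSet.pair κ y ∈ j → κ ∈ y

/-- A transitive model of (a sufficient fragment of) ZF⁻ : transitivity,
emptyset, infinity, pairing, union, and the separation and collection schemas
for the language of set theory. -/
def ModelsZFm (M : ZFSet) : Prop :=
  ZTrans M ∧ (∅ : ZFSet) ∈ M ∧ ZFSet.omega ∈ M ∧
  (∀ x ∈ M, ∀ y ∈ M, ({x, y} : ZFSet) ∈ M) ∧
  (∀ x ∈ M, ZFSet.sUnion x ∈ M) ∧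
  (∀ (n : ℕ) (φ : memLang.Formula (Fin (n + 1))) (v : Fin n → {x : ZFSet // x ∈ M}),
    ∀ a ∈ M, ∃ b ∈ M, ∀ z : ZFSet,
      z ∈ b ↔ ∃ hz : z ∈ M, z ∈ a ∧ φ.Realize (Fin.snoc v ⟨z, hz⟩)) ∧
  (∀ (n : ℕ) (φ : memLang.Formula (Fin (n + 2))) (v : Fin n → {x : ZFSet // x ∈ M}),
    ∀ a ∈ M, ∃ b ∈ M, ∀ x, ∀ hx : x ∈ M, x ∈ a →
      (∃ y : {x : ZFSet // x ∈ M}, φ.Realize (Fin.snoc (Fin.snoc v ⟨x, hx⟩) y)) →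
      ∃ y, ∃ hy : y ∈ M, y ∈ b ∧ φ.Realize (Fin.snoc (Fin.snoc v ⟨x, hx⟩) ⟨y, hy⟩))

/-- A transitive model of ZFC⁻ : ZF⁻ together with choice. -/
def ModelsZFCm (M : ZFSet) : Prop :=
  ModelsZFm M ∧
  ∀ x ∈ M, (∀ y ∈ x, y ≠ ∅) →
    ∃ f ∈ M, ZFSet.IsFunc x (ZFSet.sUnion x) f ∧ ∀ y ∈ x, ∃ z ∈ y, ZFSet.pair y z ∈ f

/-- A nice model (for `κ`): a transitive model of ZFC⁻ of size `κ` containing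
`κ` and closed under `<κ`-sequences. -/
def NiceModel (κ M : ZFSet) : Prop :=
  ZTrans M ∧ HasSize M κ ∧ κ ∈ M ∧ SeqClosed κ M ∧ ModelsZFCm M

/-- `κ` is a cardinal (an initial ordinal) in the `ZFSet` sense. -/
def IsZCardinal (κ : ZFSet) : Prop :=
  κ.IsOrdinal ∧ ∀ α ∈ κ, zCard α < zCard κ

/-- `κ` is an inaccessible cardinal (in the `ZFSet` sense). -/
def IsInaccZ (κ : ZFSet) : Prop :=
  IsZCardinal κ ∧ (zCard κ).IsInaccessible

/-- `p ≤ q` in the order coded by the set of pairs `le`. -/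
def zle (le p q : ZFSet) : Prop := ZFSet.pair p q ∈ le

/-- `G` is a filter on the poset with conditions `P` and order `le`. -/
def IsFilterOn (P le : ZFSet) (G : Set ZFSet) : Prop :=
  (∀ p ∈ G, p ∈ P) ∧ G.Nonempty ∧
  (∀ p ∈ G, ∀ q, q ∈ P → zle le p q → q ∈ G) ∧
  (∀ p ∈ G, ∀ q ∈ G, ∃ r ∈ G, zle le r p ∧ zle le r q)

/-- `D` is a dense subset of the poset `(P, le)`. -/
def ZDense (P le D : ZFSet) : Prop :=
  D ⊆ P ∧ ∀ p ∈ P, ∃ q ∈ D, zle le q p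

/-- `D` is open in the poset `(P, le)`. -/
def ZOpen (P le D : ZFSet) : Prop :=
  ∀ p ∈ D, ∀ q, q ∈ P → zle le q p → q ∈ D

/-- `G` meets every dense subset of `(P, le)` that belongs to `N`. -/
def MeetsDenseIn (P le N : ZFSet) (G : Set ZFSet) : Prop :=
  ∀ D, D ∈ N → ZDense P le D → ∃ p ∈ G, p ∈ D

/-- `f` is (coded as) an injective function from `A` to `B`. -/
def IsInjFuncSet (A B f : ZFSet) : Prop :=
  ZFSet.IsFunc A B f ∧ ∀ a a' b, ZFSet.pair a b ∈ f → ZFSet.pair a' b ∈ f → a = a'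

/-- `f` is (coded as) a bijection from `A` to `B`. -/
def IsBijFuncSet (A B f : ZFSet) : Prop :=
  IsInjFuncSet A B f ∧ ∀ b ∈ B, ∃ a ∈ A, ZFSet.pair a b ∈ f

/-- `π` is an ∈-isomorphism of `X` with `N₀` (e.g. a Mostowski collapse). -/
def EpsIso (X N₀ π : ZFSet) : Prop :=
  IsBijFuncSet X N₀ π ∧
  ∀ x y x' y', ZFSet.pair x x' ∈ π → ZFSet.pair y y' ∈ π → (x ∈ y ↔ x' ∈ y')

/-- `s` is a finite sequence of elements of `θ`, i.e. a function from some
`n ∈ ω` into `θ`; `s ∈ θ^{<ω}`. -/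
def FinSeqIn (θ s : ZFSet) : Prop :=
  ∃ n ∈ ZFSet.omega, ZFSet.IsFunc n θ s

/-- `z` belongs to the seed hull `{ j(g)(s) : g ∈ M a function, s ∈ θ^{<ω} }`. -/
def InHull (M j θ z : ZFSet) : Prop :=
  ∃ g ∈ M, (∃ d r, ZFSet.IsFunc d r g) ∧
    ∃ jg, ZFSet.pair g jg ∈ j ∧ ∃ s, FinSeqIn θ s ∧ ZFSet.pair s z ∈ jg

/-- `κ` is `θ`-unfoldable: every nice model has an elementary embedding with
critical point `κ` sending `κ` to an ordinal `≥ θ`. -/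
def ThetaUnfoldable (κ θ : ZFSet) : Prop :=
  ∀ M, NiceModel κ M →
    ∃ N j, ZTrans N ∧ ElemEmbSet M N j ∧ CritPt j κ ∧
      ∀ y, ZFSet.pair κ y ∈ j → θ ⊆ y

/-- `κ` is unfoldable. -/
def Unfoldable (κ : ZFSet) : Prop :=
  ∀ θ : ZFSet, θ.IsOrdinal → ThetaUnfoldable κ θ

/-- `γ` is in the domain of the (set-coded) partial function `p`. -/
def ffDom (p γ : ZFSet) : Prop := ∃ δ, ZFSet.pair γ δ ∈ p

/-- `p` is a condition of the fast function forcing at `Λ`: a partial function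
`p : Λ → Λ` of size `< Λ` such that every `γ ∈ dom p` is inaccessible,
`p″γ ⊆ γ`, and `|p ↾ γ| < γ`. -/
def IsFFCond (Λ p : ZFSet) : Prop :=
  (∀ z ∈ p, ∃ γ δ, γ ∈ Λ ∧ δ ∈ Λ ∧ z = ZFSet.pair γ δ) ∧
  (∀ γ δ δ', ZFSet.pair γ δ ∈ p → ZFSet.pair γ δ' ∈ p → δ = δ') ∧
  zCard p < zCard Λ ∧
  ∀ γ, ffDom p γ →
    IsInaccZ γ ∧
    (∀ x δ, ZFSet.pair x δ ∈ p → x ∈ γ → δ ∈ γ) ∧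
    zCard (ZFSet.sep (fun z => ∃ x δ, x ∈ γ ∧ z = ZFSet.pair x δ) p) < zCard γ

/-- A condition of the tail fast function forcing `F_{γ,κ}`: a fast function
condition at `κ` whose domain is contained in `(γ, κ)`. -/
def TailCond (κ γ t : ZFSet) : Prop :=
  IsFFCond κ t ∧ ∀ x, ffDom t x → γ ∈ x

/-- The von Neumann ordinal `1`. -/
def zOne : ZFSet := {∅}

/-- The von Neumann ordinal `2`. -/
def zTwo : ZFSet := {∅, {∅}}

/-- A condition of `Add(κ,θ)`: a partial function `p : θ × κ → 2` of
size `< κ`. -/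
def AddCond (κ θ p : ZFSet) : Prop :=
  (∀ z ∈ p, ∃ i ∈ θ, ∃ ξ ∈ κ, ∃ b ∈ zTwo, z = ZFSet.pair (ZFSet.pair i ξ) b) ∧
  (∀ a b b', ZFSet.pair a b ∈ p → ZFSet.pair a b' ∈ p → b = b') ∧
  zCard p < zCard κ

/-- A condition of `Add(κ,1)`: a partial function `p : κ → 2` of size `< κ`. -/
def AddCond1 (κ p : ZFSet) : Prop :=
  (∀ z ∈ p, ∃ ξ ∈ κ, ∃ b ∈ zTwo, z = ZFSet.pair ξ b) ∧
  (∀ ξ b b', ZFSet.pair ξ b ∈ p → ZFSet.pair ξ b' ∈ p → b = b') ∧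
  zCard p < zCard κ

/-- `val` is the interpretation-of-names function determined by the filter
`G` : `val τ = { val σ : ∃ p ∈ G, ⟨σ, p⟩ ∈ τ }`. -/
def IsValFun (G : Set ZFSet) (val : ZFSet → ZFSet) : Prop :=
  ∀ τ z, z ∈ val τ ↔ ∃ σ p, p ∈ G ∧ ZFSet.pair σ p ∈ τ ∧ z = val σ

/-- `G` is a `V`-generic filter for the forcing `Add(κ,θ)` (ordered by
reverse inclusion): a filter meeting every dense class of conditions. -/
def VGenericAdd (κ θ : ZFSet) (G : Set ZFSet) : Prop :=
  (∀ p ∈ G, AddCond κ θ p) ∧ G.Nonempty ∧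
  (∀ p ∈ G, ∀ q, AddCond κ θ q → q ⊆ p → q ∈ G) ∧
  (∀ p ∈ G, ∀ q ∈ G, ∃ r ∈ G, p ⊆ r ∧ q ⊆ r) ∧
  (∀ D : Set ZFSet, (∀ p, AddCond κ θ p → ∃ q ∈ D, AddCond κ θ q ∧ p ⊆ q) →
    ∃ p ∈ G, p ∈ D)

/-- A set `b` is definable (with parameters) over the ∈-structure `U`. -/
def DefOver (U b : ZFSet) : Prop :=
  b ⊆ U ∧ ∃ (n : ℕ) (φ : memLang.Formula (Fin (n + 1)))
    (v : Fin n → {x : ZFSet // x ∈ U}),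
    ∀ z : ZFSet, z ∈ b ↔ ∃ hz : z ∈ U, φ.Realize (Fin.snoc v ⟨z, hz⟩)

/-- Membership in the constructible universe built from the hierarchy `LS`. -/
def InLvia (LS : ZFSet → ZFSet) (z : ZFSet) : Prop :=
  ∃ o : ZFSet, o.IsOrdinal ∧ z ∈ LS o

/-- `M` has size `κ` as witnessed inside the class `C`. -/
def HasSizeIn (C : ZFSet → Prop) (M κ : ZFSet) : Prop :=
  ∃ f, C f ∧ IsBijFuncSet κ M f

/-- `M` is closed under those `<κ`-sequences belonging to the class `C`. -/
def SeqClosedIn (C : ZFSet → Prop) (κ M : ZFSet) : Prop :=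
  ∀ α ∈ κ, ∀ f : ZFSet, C f → ZFSet.IsFunc α M f → f ∈ M

/-- A nice model for `κ`, relativized to the class `C`. -/
def NiceModelIn (C : ZFSet → Prop) (κ M : ZFSet) : Prop :=
  C M ∧ ZTrans M ∧ HasSizeIn C M κ ∧ κ ∈ M ∧ SeqClosedIn C κ M ∧ ModelsZFCm M

/-- `κ` is unfoldable, relativized to the class `C`. -/
def UnfoldableIn (C : ZFSet → Prop) (κ : ZFSet) : Prop :=
  ∀ θ : ZFSet, θ.IsOrdinal → C θ → ∀ M, NiceModelIn C κ M →
    ∃ N j, C N ∧ C j ∧ ZTrans N ∧ ElemEmbSet M N j ∧ CritPt j κ ∧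
      ∀ y, ZFSet.pair κ y ∈ j → θ ⊆ y

/-- `κ` is strongly unfoldable, relativized to the class `C`: the target `N`
may additionally be required to contain `(V_θ)^C`. -/
noncomputable def StronglyUnfoldableIn (C : ZFSet → Prop) (κ : ZFSet) : Prop :=
  ∀ θ : ZFSet, θ.IsOrdinal → C θ → ∀ M, NiceModelIn C κ M →
    ∃ N j, C N ∧ C j ∧ ZTrans N ∧ ElemEmbSet M N j ∧ CritPt j κ ∧
      (∀ y, ZFSet.pair κ y ∈ j → θ ⊆ y) ∧
      ∀ x : ZFSet, C x → x.rank < θ.rank → x ∈ N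

/-!
Any two entries of the union of a chain lie in a single condition of the chain, which can be
chosen to have a given `δ ∈ dom u` in its domain; this makes the union a partial function with
`u″δ ⊆ δ`. The union and each restriction `u ↾ δ` are unions of at most `|λ| ≤ |γ|` sets of size
`< κ` (resp. `< δ`), hence small, since `κ` and every `δ ∈ dom u` are regular cardinals above `γ`.
-/

theorem zCard_mono {x y : ZFSet} (h : x ⊆ y) : zCard x ≤ zCard y :=
  Cardinal.mk_le_mk_of_subset fun _ hz => h hz

theorem zCard_lt_of_mem_iff_exists {s u : ZFSet} {q : ZFSet → ZFSet} {c : Cardinal}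
    (hc : c.IsRegular) (hs : zCard s < c) (hu : ∀ z, z ∈ u ↔ ∃ i ∈ s, z ∈ q i)
    (hq : ∀ i ∈ s, zCard (q i) < c) : zCard u < c := by
  have hset : u.toSet = ⋃ i ∈ s.toSet, (q i).toSet := by
    ext z
    simp only [Set.mem_iUnion, exists_prop]
    exact hu z
  rw [zCard, hset]
  exact (Cardinal.card_biUnion_lt_iff_forall_of_isRegular hc hs).2 hq

theorem zCard_sep_lt_of_mem_iff_exists {s u : ZFSet} {q : ZFSet → ZFSet} {c : Cardinal}
    {P : ZFSet → Prop} (hc : c.IsRegular) (hs : zCard s < c)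
    (hu : ∀ z, z ∈ u ↔ ∃ i ∈ s, z ∈ q i) (hq : ∀ i ∈ s, zCard (ZFSet.sep P (q i)) < c) :
    zCard (ZFSet.sep P u) < c := by
  refine zCard_lt_of_mem_iff_exists hc hs (fun z => ?_) hq
  simp only [ZFSet.mem_sep, hu]
  exact ⟨fun ⟨⟨i, hi, hzi⟩, hz⟩ => ⟨i, hi, hzi, hz⟩, fun ⟨i, hi, hzi, hz⟩ => ⟨⟨i, hi, hzi⟩, hz⟩⟩

theorem directedOn_of_chain {lam : ZFSet} {q : ZFSet → ZFSet} (hlam : lam.IsOrdinal)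
    (hdesc : ∀ i ∈ lam, ∀ i' ∈ lam, i ∈ i' → q i ⊆ q i') :
    DirectedOn (fun i j => q i ⊆ q j) lam.toSet := by
  intro i hi i' hi'
  rcases (hlam.mem hi).mem_trichotomous (hlam.mem hi') with h | rfl | h
  · exact ⟨i', hi', hdesc i hi i' hi' h, subset_rfl⟩
  · exact ⟨i, hi, subset_rfl, subset_rfl⟩
  · exact ⟨i, hi, subset_rfl, hdesc i' hi' i hi h⟩

theorem ffDom.mono {p p' a : ZFSet} (h : p ⊆ p') : ffDom p a → ffDom p' a
  | ⟨δ, hδ⟩ => ⟨δ, h hδ⟩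

section DirectedUnion

variable {s u : ZFSet} {q : ZFSet → ZFSet}

theorem exists_ffDom_of_mem_iff_exists (hu : ∀ z, z ∈ u ↔ ∃ i ∈ s, z ∈ q i) {a : ZFSet}
    (ha : ffDom u a) : ∃ i ∈ s, ffDom (q i) a :=
  let ⟨δ, hδ⟩ := ha
  let ⟨i, hi, hδi⟩ := (hu _).1 hδ
  ⟨i, hi, δ, hδi⟩

theorem IsFFCond.of_directed_union {Λ : ZFSet} (hΛ : (zCard Λ).IsRegular)
    (hs : zCard s < zCard Λ) (hu : ∀ z, z ∈ u ↔ ∃ i ∈ s, z ∈ q i)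
    (hdir : DirectedOn (fun i j => q i ⊆ q j) s.toSet) (hq : ∀ i ∈ s, IsFFCond Λ (q i))
    (hsmall : ∀ a, ffDom u a → zCard s < zCard a) : IsFFCond Λ u := by
  refine ⟨fun z hz => ?_, fun a δ δ' hδ hδ' => ?_,
    zCard_lt_of_mem_iff_exists hΛ hs hu fun i hi => (hq i hi).2.2.1, fun a ha => ?_⟩
  · obtain ⟨i, hi, hzi⟩ := (hu z).1 hz
    exact (hq i hi).1 z hzi
  · obtain ⟨i, hi, hδi⟩ := (hu _).1 hδ
    obtain ⟨i', hi', hδi'⟩ := (hu _).1 hδ'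
    obtain ⟨j, hj, hij, hi'j⟩ := hdir i hi i' hi'
    exact (hq j hj).2.1 a δ δ' (hij hδi) (hi'j hδi')
  obtain ⟨i₀, hi₀, ha₀⟩ := exists_ffDom_of_mem_iff_exists hu ha
  have hcover : ∀ i ∈ s, ∃ j ∈ s, q i ⊆ q j ∧ ffDom (q j) a := fun i hi =>
    let ⟨j, hj, hi₀j, hij⟩ := hdir i₀ hi₀ i hi
    ⟨j, hj, hij, ha₀.mono hi₀j⟩
  obtain ⟨ha_inacc, -, -⟩ := (hq i₀ hi₀).2.2.2 a ha₀
  refine ⟨ha_inacc, fun x δ hxδ hxa => ?_, ?_⟩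
  · obtain ⟨i, hi, hxδi⟩ := (hu _).1 hxδ
    obtain ⟨j, hj, hij, haj⟩ := hcover i hi
    exact ((hq j hj).2.2.2 a haj).2.1 x δ (hij hxδi) hxa
  · refine zCard_sep_lt_of_mem_iff_exists ha_inacc.2.isRegular (hsmall a ha) hu fun i hi => ?_
    obtain ⟨j, hj, hij, haj⟩ := hcover i hi
    refine (zCard_mono fun z hz => ?_).trans_lt ((hq j hj).2.2.2 a haj).2.2
    rw [ZFSet.mem_sep] at hz ⊢
    exact ⟨hij hz.1, hz.2⟩

theorem TailCond.of_directed_union {κ γ : ZFSet} (hκ : IsInaccZ κ) (hγκ : γ ∈ κ)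
    (hs : zCard s ≤ zCard γ) (hu : ∀ z, z ∈ u ↔ ∃ i ∈ s, z ∈ q i)
    (hdir : DirectedOn (fun i j => q i ⊆ q j) s.toSet) (hq : ∀ i ∈ s, TailCond κ γ (q i)) :
    TailCond κ γ u := by
  have hdom : ∀ a, ffDom u a → IsInaccZ a ∧ γ ∈ a := fun a ha =>
    let ⟨i, hi, hai⟩ := exists_ffDom_of_mem_iff_exists hu ha
    ⟨((hq i hi).1.2.2.2 a hai).1, (hq i hi).2 a hai⟩
  refine ⟨IsFFCond.of_directed_union hκ.2.isRegular (hs.trans_lt (hκ.1.2 γ hγκ)) hu hdir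
    (fun i hi => (hq i hi).1) fun a ha => ?_, fun a ha => (hdom a ha).2⟩
  obtain ⟨ha_inacc, hγa⟩ := hdom a ha
  exact hs.trans_lt (ha_inacc.1.2 γ hγa)

end DirectedUnion

theorem tail_forcing_closed_general (κ γ lam : ZFSet)
    (hκ : IsInaccZ κ) (hγκ : γ ∈ κ)
    (hlam : lam.IsOrdinal) (hlamγ : lam ⊆ γ)
    (q : ZFSet → ZFSet)
    (hcond : ∀ i ∈ lam, TailCond κ γ (q i))
    (hdesc : ∀ i ∈ lam, ∀ i' ∈ lam, i ∈ i' → q i ⊆ q i') :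
    ∃ u : ZFSet, (∀ z, z ∈ u ↔ ∃ i ∈ lam, z ∈ q i) ∧
      TailCond κ γ u ∧ ∀ i ∈ lam, q i ⊆ u := by
  set u : ZFSet := ZFSet.iUnion fun i : lam => q i
  have hu : ∀ z, z ∈ u ↔ ∃ i ∈ lam, z ∈ q i := by simp [u]
  exact ⟨u, hu, TailCond.of_directed_union hκ hγκ (zCard_mono hlamγ) hu
    (directedOn_of_chain hlam hdesc) hcond, fun i hi z hz => (hu z).2 ⟨i, hi, hz⟩⟩

/-- The tail fast function forcing `F_{γ,κ}` is `≤γ`-closed: every descending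
chain of conditions of length `≤ γ` has a lower bound, namely its union. -/
theorem tail_forcing_closed (κ γ lam : ZFSet)
    (hκ : IsInaccZ κ) (hγ : γ.IsOrdinal) (hγκ : γ ∈ κ)
    (hlam : lam.IsOrdinal) (hlamγ : lam ⊆ γ)
    (q : ZFSet → ZFSet)
    (hcond : ∀ i ∈ lam, TailCond κ γ (q i))
    (hdesc : ∀ i ∈ lam, ∀ i' ∈ lam, i ∈ i' → q i ⊆ q i') :
    ∃ u : ZFSet, (∀ z, z ∈ u ↔ ∃ i ∈ lam, z ∈ q i) ∧
      TailCond κ γ u ∧ ∀ i ∈ lam, q i ⊆ u :=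
  tail_forcing_closed_general κ γ lam hκ hγκ hlam hlamγ q hcond hdesc
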